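/- For 0 ≤ d ≤ n, there is a unique ring homomorphism f : R_{n+1,d+1} → R_{n,d} with f(x_i) = x_i for all 1 ≤ i ≤ n−d; f is surjective and its kernel is the principal ideal of R_{n+1,d+1} generated by the class of s_{d+1}. In particular, R_{n,d} ≅ R_{n+1,d+1}/(s_{d+1}), and the polynomial s_{n+1} lies in the ideal (s_{d+1},…,s_n) of ℤ[x_1,…,x_{n−d}]. -/

import Mathlib

open MvPolynomial

/-- The power series `1 + x₁ t + x₂ t² + ⋯ + x_m t^m` in `ℤ[x₁,…,x_m][[t]]`,
where `x_{i+1}` is the variable `X i` for `i : Fin m`. -/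
noncomputable def genSeries (m : ℕ) : PowerSeries (MvPolynomial (Fin m) ℤ) :=
  1 + ∑ i : Fin m,
    PowerSeries.monomial ((i : ℕ) + 1) (X i)

/-- The polynomials `s_k ∈ ℤ[x₁,…,x_m]` defined by
`(1 + x₁ t + ⋯ + x_m t^m)⁻¹ = 1 + ∑_{k ≥ 1} s_k t^k`. -/
noncomputable def sPoly (m : ℕ) (k : ℕ) : MvPolynomial (Fin m) ℤ :=
  PowerSeries.coeff k (PowerSeries.invOfUnit (genSeries m) 1)

/-- The quotient ring `ℤ[x₁,…,x_m]/(s_a,…,s_b)`.  Thus `R_{n,d} = RK (n-d) (d+1) n`,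
`R_{n+1,d+1} = RK (n-d) (d+2) (n+1)` and `R_{n,d+1} = RK (n-d-1) (d+2) n`. -/
abbrev RK (m a b : ℕ) : Type :=
  MvPolynomial (Fin m) ℤ ⧸ Ideal.span (sPoly m '' Set.Icc a b)

/-- The quotient map `ℤ[x₁,…,x_m] → ℤ[x₁,…,x_m]/(s_a,…,s_b)`. -/
noncomputable def qk (m a b : ℕ) : MvPolynomial (Fin m) ℤ →+* RK m a b :=
  Ideal.Quotient.mk _

/-- `xv m t` is the variable `x_t` of `ℤ[x₁,…,x_m]`, with the conventions
`x₀ = 1` and `x_t = 0` for `t < 0` or `t > m`. -/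
noncomputable def xv (m : ℕ) (t : ℤ) : MvPolynomial (Fin m) ℤ :=
  if t = 0 then 1
  else if h : 1 ≤ t ∧ t ≤ (m : ℤ) then X (⟨t.toNat - 1, by omega⟩ : Fin m) else 0

/-- The Schur polynomial `Δ_a ∈ ℤ[x₁,…,x_m]` attached to a tuple
`a = (a₁,…,a_d)`: the `d × d` determinant whose `(i,j)` entry is
`x_{a_i + j - i}`, with the conventions `x₀ = 1` and `x_t = 0` for `t < 0`
or `t > m`. -/
noncomputable def schur (m : ℕ) {d : ℕ} (a : Fin d → ℕ) : MvPolynomial (Fin m) ℤ :=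
  Matrix.det (Matrix.of fun i j : Fin d => xv m ((a i : ℤ) + (j : ℤ) - (i : ℤ)))

/-!
The `s_k` satisfy the linear recurrence `s_k = -(x₁ s_{k-1} + ⋯ + x_m s_{k-m})` of length `m`,
read off from `(1 + x₁ t + ⋯ + x_m t^m) · ∑ s_k t^k = 1`. Hence any `m` consecutive `s_k` generate
the next one, so `(s_{a+1},…,s_{b+1}) ⊆ (s_a,…,s_b)` and `(s_a,…,s_b) = (s_{a+1},…,s_{b+1}) + (s_a)`
as soon as `b - a + 1 ≥ m`. The map `f` is then the factor map between the two quotients, and its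
kernel is the image of the larger ideal, generated by the class of `s_a`.
-/

lemma constantCoeff_genSeries (m : ℕ) : PowerSeries.constantCoeff (genSeries m) = 1 := by
  simp only [genSeries, map_add, map_sum, map_one,
    ← PowerSeries.coeff_zero_eq_constantCoeff_apply, PowerSeries.coeff_monomial]
  simp

lemma sPoly_eq_neg_sum {m k : ℕ} (hk : k ≠ 0) :
    sPoly m k = -∑ i : Fin m,
      if (i : ℕ) + 1 ≤ k then X i * sPoly m (k - ((i : ℕ) + 1)) else 0 := by
  have hinv : genSeries m * PowerSeries.invOfUnit (genSeries m) 1 = 1 :=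
    PowerSeries.mul_invOfUnit _ 1 (by simp [constantCoeff_genSeries])
  have hcoeff := congrArg (PowerSeries.coeff k) hinv
  rw [PowerSeries.coeff_mul, PowerSeries.coeff_one, if_neg hk,
    Finset.Nat.sum_antidiagonal_eq_sum_range_succ_mk] at hcoeff
  simp only [genSeries, map_add, map_sum, PowerSeries.coeff_one, PowerSeries.coeff_monomial,
    add_mul, Finset.sum_add_distrib, Finset.sum_mul, ite_mul, one_mul, zero_mul] at hcoeff
  rw [Finset.sum_ite_eq' (Finset.range (k + 1)) 0, Finset.sum_comm] at hcoeff
  simp only [Finset.sum_ite_eq' (Finset.range (k + 1)), Finset.mem_range, Nat.lt_succ_iff,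
    Nat.zero_le, if_true, Nat.sub_zero] at hcoeff
  exact eq_neg_of_add_eq_zero_left hcoeff

section Consecutive

variable {m a b : ℕ}

lemma sPoly_succ_mem_span_Icc (h : a + m ≤ b + 1) :
    sPoly m (b + 1) ∈ Ideal.span (sPoly m '' Set.Icc a b) := by
  rw [sPoly_eq_neg_sum (Nat.succ_ne_zero b)]
  refine neg_mem (Ideal.sum_mem _ fun i _ => ?_)
  have hi : (i : ℕ) < m := i.isLt
  rw [if_pos (by omega)]
  exact Ideal.mul_mem_left _ _ (Ideal.subset_span ⟨b + 1 - ((i : ℕ) + 1), by grind, rfl⟩)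

lemma span_sPoly_Icc_succ_le (h : a + m ≤ b + 1) :
    Ideal.span (sPoly m '' Set.Icc (a + 1) (b + 1)) ≤ Ideal.span (sPoly m '' Set.Icc a b) := by
  rw [Ideal.span_le]
  rintro _ ⟨k, ⟨hak, hkb⟩, rfl⟩
  rcases hkb.eq_or_lt with rfl | hkb
  · exact sPoly_succ_mem_span_Icc h
  · exact Ideal.subset_span ⟨k, ⟨by omega, by omega⟩, rfl⟩

lemma span_sPoly_Icc_eq_sup (h : a + m ≤ b + 1) :
    Ideal.span (sPoly m '' Set.Icc a b) =
      Ideal.span (sPoly m '' Set.Icc (a + 1) (b + 1)) ⊔ Ideal.span {sPoly m a} := by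
  apply le_antisymm
  · rw [Ideal.span_le]
    rintro _ ⟨k, ⟨hak, hkb⟩, rfl⟩
    rcases hak.eq_or_lt with rfl | hak
    · exact Ideal.mem_sup_right (Ideal.mem_span_singleton_self _)
    · exact Ideal.mem_sup_left (Ideal.subset_span ⟨k, ⟨hak, by omega⟩, rfl⟩)
  · refine sup_le (span_sPoly_Icc_succ_le h) ?_
    rw [Ideal.span_singleton_le_iff_mem]
    rcases Nat.lt_or_ge b a with hba | hab
    · obtain rfl : a = b + 1 := by omega
      exact sPoly_succ_mem_span_Icc h
    · exact Ideal.subset_span ⟨a, ⟨le_rfl, hab⟩, rfl⟩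

end Consecutive

lemma Ideal.Quotient.ker_factor_eq_span_singleton {R : Type*} [CommRing R] {I J : Ideal R}
    {s : R} (H : I ≤ J) (hJ : J = I ⊔ Ideal.span {s}) :
    RingHom.ker (Ideal.Quotient.factor H) = Ideal.span {Ideal.Quotient.mk I s} := by
  rw [Ideal.Quotient.factor_ker, hJ, Ideal.map_sup, Ideal.map_quotient_self, bot_sup_eq,
    Ideal.map_span, Set.image_singleton]

lemma MvPolynomial.quotient_ringHom_ext_int {σ S : Type*} [Semiring S]
    {I : Ideal (MvPolynomial σ ℤ)} {f g : MvPolynomial σ ℤ ⧸ I →+* S}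
    (h : ∀ i, f (Ideal.Quotient.mk I (X i)) = g (Ideal.Quotient.mk I (X i))) : f = g :=
  Ideal.Quotient.ringHom_ext <| MvPolynomial.ringHom_ext
    (fun r => RingHom.congr_fun (RingHom.ext_int ((f.comp _).comp C) ((g.comp _).comp C)) r) h

/-- There is a unique ring homomorphism `f : R_{n+1,d+1} → R_{n,d}` with
`f(xᵢ) = xᵢ` for all `1 ≤ i ≤ n-d`; it is surjective and its kernel is the
principal ideal generated by the class of `s_{d+1}`; moreover `s_{n+1}` lies
in the ideal `(s_{d+1},…,s_n)` of `ℤ[x₁,…,x_{n-d}]`. -/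
theorem stmt3 (n d : ℕ) (hd : d ≤ n) :
    (∃! f : RK (n - d) (d + 2) (n + 1) →+* RK (n - d) (d + 1) n,
        ∀ i : Fin (n - d),
          f (qk (n - d) (d + 2) (n + 1) (X i)) = qk (n - d) (d + 1) n (X i)) ∧
    (∀ f : RK (n - d) (d + 2) (n + 1) →+* RK (n - d) (d + 1) n,
        (∀ i : Fin (n - d),
            f (qk (n - d) (d + 2) (n + 1) (X i)) = qk (n - d) (d + 1) n (X i)) →
        Function.Surjective f ∧
        RingHom.ker f =
          Ideal.span {qk (n - d) (d + 2) (n + 1) (sPoly (n - d) (d + 1))}) ∧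
    sPoly (n - d) (n + 1) ∈ Ideal.span (sPoly (n - d) '' Set.Icc (d + 1) n) := by
  have hlen : d + 1 + (n - d) ≤ n + 1 := by omega
  have hle := span_sPoly_Icc_succ_le hlen
  set f₀ := Ideal.Quotient.factor hle
  have hf₀ : ∀ i : Fin (n - d),
      f₀ (qk (n - d) (d + 2) (n + 1) (X i)) = qk (n - d) (d + 1) n (X i) :=
    fun i => Ideal.Quotient.factor_mk hle _
  have huniq : ∀ f : RK (n - d) (d + 2) (n + 1) →+* RK (n - d) (d + 1) n,
      (∀ i : Fin (n - d),
        f (qk (n - d) (d + 2) (n + 1) (X i)) = qk (n - d) (d + 1) n (X i)) → f = f₀ :=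
    fun f hf => quotient_ringHom_ext_int fun i => (hf i).trans (hf₀ i).symm
  refine ⟨⟨f₀, hf₀, huniq⟩, fun f hf => ?_, sPoly_succ_mem_span_Icc hlen⟩
  obtain rfl := huniq f hf
  exact ⟨Ideal.Quotient.factor_surjective hle,
    Ideal.Quotient.ker_factor_eq_span_singleton hle (span_sPoly_Icc_eq_sup hlen)⟩
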